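/- Let Θ̃ : ℝ⁴ → ℝ be twice continuously differentiable, let a, b ∈ ℝ⁴, and let λ₁, λ₂, λ₃, λ₄ be pairwise distinct real numbers. Define Θ : ℝ⁸ → ℝ by Θ(x,y) := (1/2)Σ_{i,j=1}^{4}(a_i b_j − a_j b_i)x^i y^j + Θ̃(x¹−λ₁y¹,...,x⁴−λ₄y⁴), and define Φ : ℝ⁴ → ℝ by Φ(x) := (1/2)Σ_{i≠j}(a_i b_j − a_j b_i)x^i x^j/(λ_i − λ_j) + Θ̃(x). Then Θ satisfies the TED equation on ℝ⁸ if and only if Φ satisfies the general heavenly equation (λ₂−λ₃)(λ₁−λ₄)Φ_{x²x³}Φ_{x¹x⁴} + (λ₁−λ₃)(λ₄−λ₂)Φ_{x¹x³}Φ_{x⁴x²} + (λ₁−λ₂)(λ₃−λ₄)Φ_{x¹x²}Φ_{x³x⁴} = 0 on ℝ⁴. Moreover, the TED expression of Θ at (x,y) equals the general heavenly expression of Φ evaluated at the point (x¹−λ₁y¹,...,x⁴−λ₄y⁴). -/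

import Mathlib

noncomputable section

/-- `ℝ⁸` with coordinates `(x¹,…,x⁴, y¹,…,y⁴)`. -/
abbrev E8 : Type := (Fin 4 → ℝ) × (Fin 4 → ℝ)

/-- Directional (partial) derivative of `f` in the direction `v`. -/
def pdv {E : Type*} [NormedAddCommGroup E] [NormedSpace ℝ E]
    (v : E) (f : E → ℝ) (z : E) : ℝ := fderiv ℝ f z v

/-- Direction of the coordinate `x^i`. -/
def dx (i : Fin 4) : E8 := (Pi.single i 1, 0)
/-- Direction of the coordinate `y^i`. -/
def dy (i : Fin 4) : E8 := (0, Pi.single i 1)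

/-- `ω_{ij} = Θ_{x^i y^j} − Θ_{x^j y^i}`. -/
def ωc (Θ : E8 → ℝ) (i j : Fin 4) (z : E8) : ℝ :=
  pdv (dx i) (pdv (dy j) Θ) z - pdv (dx j) (pdv (dy i) Θ) z

/-- The left-hand side of the TED equation,
`(Θ_{x¹y²}−Θ_{x²y¹})(Θ_{x³y⁴}−Θ_{x⁴y³}) + (Θ_{x²y³}−Θ_{x³y²})(Θ_{x¹y⁴}−Θ_{x⁴y¹})
  + (Θ_{x³y¹}−Θ_{x¹y³})(Θ_{x²y⁴}−Θ_{x⁴y²})`. -/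
def tedExpr (Θ : E8 → ℝ) (z : E8) : ℝ :=
  ωc Θ 0 1 z * ωc Θ 2 3 z + ωc Θ 1 2 z * ωc Θ 0 3 z + ωc Θ 2 0 z * ωc Θ 1 3 z

/-- Second mixed partial derivative `Φ_{x^i x^j}` of a function on `ℝ⁴`. -/
def pd2 (i j : Fin 4) (Φ : (Fin 4 → ℝ) → ℝ) (x : Fin 4 → ℝ) : ℝ :=
  pdv (Pi.single i 1) (pdv (Pi.single j 1) Φ) x

/-- The left-hand side of the general heavenly equation,
`(λ₂−λ₃)(λ₁−λ₄)Φ_{x²x³}Φ_{x¹x⁴} + (λ₁−λ₃)(λ₄−λ₂)Φ_{x¹x³}Φ_{x⁴x²}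
  + (λ₁−λ₂)(λ₃−λ₄)Φ_{x¹x²}Φ_{x³x⁴}`. -/
def ghExpr (l : Fin 4 → ℝ) (Φ : (Fin 4 → ℝ) → ℝ) (x : Fin 4 → ℝ) : ℝ :=
  (l 1 - l 2) * (l 0 - l 3) * (pd2 1 2 Φ x * pd2 0 3 Φ x)
    + (l 0 - l 2) * (l 3 - l 1) * (pd2 0 2 Φ x * pd2 3 1 Φ x)
    + (l 0 - l 1) * (l 2 - l 3) * (pd2 0 1 Φ x * pd2 2 3 Φ x)

/-! With `u = (x¹ - λ₁y¹, …, x⁴ - λ₄y⁴)`, the chain rule gives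
`Θ_{x^i y^j} - Θ_{x^j y^i} = (a_i b_j - a_j b_i) + (λ_i - λ_j) Θ̃_{ij}(u)`, and the quadratic part of `Φ`
is chosen so that this is exactly `(λ_i - λ_j) Φ_{x^i x^j}(u)` for `i ≠ j`. Substituting into the
TED expression turns it, product by product, into the general heavenly expression of `Φ` at `u`;
the equivalence of the two equations follows since `(x, y) ↦ u` is onto. -/

section SecondDerivatives

variable {E F : Type*} [NormedAddCommGroup E] [NormedSpace ℝ E]
  [NormedAddCommGroup F] [NormedSpace ℝ F]

lemma pdv_bilinear_diag_add_comp (B : E →L[ℝ] E →L[ℝ] ℝ) (L : E →L[ℝ] F) {f : F → ℝ}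
    (hf : Differentiable ℝ f) (v : E) :
    pdv v (fun z => B z z + f (L z)) = fun z => B z v + B v z + fderiv ℝ f (L z) (L v) := by
  ext z
  have h : HasFDerivAt (fun z => B z z + f (L z)) _ z :=
    (B.hasFDerivAt_of_bilinear (hasFDerivAt_id z) (hasFDerivAt_id z)).fun_add
      ((hf (L z)).hasFDerivAt.comp z L.hasFDerivAt)
  rw [pdv, h.fderiv]
  simp

lemma pdv_pdv_bilinear_diag_add_comp (B : E →L[ℝ] E →L[ℝ] ℝ) (L : E →L[ℝ] F) {f : F → ℝ}
    (hf : ContDiff ℝ 2 f) (u v z : E) :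
    pdv u (pdv v (fun z => B z z + f (L z))) z
      = B u v + B v u + fderiv ℝ (fderiv ℝ f) (L z) (L u) (L v) := by
  have hf' : Differentiable ℝ (fderiv ℝ f) :=
    (hf.fderiv_right (m := 1) le_rfl).differentiable one_ne_zero
  have h : HasFDerivAt (fun z => B z v + B v z + fderiv ℝ f (L z) (L v)) _ z :=
    ((B.flip v).hasFDerivAt.fun_add (B v).hasFDerivAt).fun_add
      (((hf' (L z)).hasFDerivAt.comp z L.hasFDerivAt).clm_apply (hasFDerivAt_const (L v) z))
  rw [pdv_bilinear_diag_add_comp B L (hf.differentiable two_ne_zero), pdv, h.fderiv]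
  simp

end SecondDerivatives

section CoordForm

variable {E ι : Type*} [NormedAddCommGroup E] [NormedSpace ℝ E] [Fintype ι]

def coordForm (φ ψ : ι → E →L[ℝ] ℝ) (c : ι → ι → ℝ) : E →L[ℝ] E →L[ℝ] ℝ :=
  ∑ i, ∑ j, c i j • (φ i).smulRight (ψ j)

@[simp]
lemma coordForm_apply (φ ψ : ι → E →L[ℝ] ℝ) (c : ι → ι → ℝ) (z w : E) :
    coordForm φ ψ c z w = ∑ i, ∑ j, c i j * φ i z * ψ j w := by
  simp [coordForm, mul_assoc]

end CoordForm

def xCoord (i : Fin 4) : E8 →L[ℝ] ℝ :=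
  (ContinuousLinearMap.proj i).comp (ContinuousLinearMap.fst ℝ _ _)

def yCoord (i : Fin 4) : E8 →L[ℝ] ℝ :=
  (ContinuousLinearMap.proj i).comp (ContinuousLinearMap.snd ℝ _ _)

def waveMap (l : Fin 4 → ℝ) : E8 →L[ℝ] (Fin 4 → ℝ) :=
  ContinuousLinearMap.pi fun k => xCoord k - l k • yCoord k

@[simp] lemma xCoord_apply (i : Fin 4) (z : E8) : xCoord i z = z.1 i := rfl
@[simp] lemma yCoord_apply (i : Fin 4) (z : E8) : yCoord i z = z.2 i := rfl
@[simp] lemma waveMap_apply (l : Fin 4 → ℝ) (z : E8) (k : Fin 4) :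
    waveMap l z k = z.1 k - l k * z.2 k := rfl

@[simp] lemma waveMap_mk_zero (l x : Fin 4 → ℝ) : waveMap l (x, 0) = x := by
  ext k; simp

lemma waveMap_dx (l : Fin 4 → ℝ) (i : Fin 4) : waveMap l (dx i) = Pi.single i 1 := by
  ext k; simp [dx]

lemma waveMap_dy (l : Fin 4 → ℝ) (j : Fin 4) :
    waveMap l (dy j) = -l j • (Pi.single j 1 : Fin 4 → ℝ) := by
  ext k; by_cases h : k = j <;> simp [dy, h]

lemma ωc_swap (Θ : E8 → ℝ) (i j : Fin 4) (z : E8) : ωc Θ j i z = -ωc Θ i j z := by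
  simp only [ωc, neg_sub]

lemma tedExpr_eq_ghExpr {Θ : E8 → ℝ} {Φ : (Fin 4 → ℝ) → ℝ} {l : Fin 4 → ℝ} {z : E8}
    {x : Fin 4 → ℝ} (h : ∀ i j, i ≠ j → ωc Θ i j z = (l i - l j) * pd2 i j Φ x) :
    tedExpr Θ z = ghExpr l Φ x := by
  rw [tedExpr, ghExpr, ωc_swap Θ 0 2, ωc_swap Θ 3 1, h 0 1 (by decide), h 2 3 (by decide),
    h 1 2 (by decide), h 0 3 (by decide), h 0 2 (by decide), h 3 1 (by decide)]
  ring

section Reduction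

variable (a b l : Fin 4 → ℝ)

def thetaForm : E8 →L[ℝ] E8 →L[ℝ] ℝ :=
  coordForm xCoord yCoord fun i j => (a i * b j - a j * b i) / 2

def phiForm : (Fin 4 → ℝ) →L[ℝ] (Fin 4 → ℝ) →L[ℝ] ℝ :=
  coordForm (fun i => ContinuousLinearMap.proj i) (fun i => ContinuousLinearMap.proj i)
    fun i j => if i ≠ j then (a i * b j - a j * b i) / (l i - l j) / 2 else 0

variable {a b l} {T : (Fin 4 → ℝ) → ℝ}

/-- The `x^i`-derivative of `T(u)` sees `e_i` and the `y^j`-derivative sees `-λ_j e_j`, so after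
antisymmetrising, the symmetric Hessian of `T` is weighted by `λ_i - λ_j`. -/
lemma ωc_thetaForm_add (hT : ContDiff ℝ 2 T) (i j : Fin 4) (z : E8) :
    ωc (fun z => thetaForm a b z z + T (waveMap l z)) i j z
      = (a i * b j - a j * b i)
        + (l i - l j) * fderiv ℝ (fderiv ℝ T) (waveMap l z) (Pi.single i 1) (Pi.single j 1) := by
  have hsymm := second_derivative_symmetric
    (fun y => ((hT.differentiable two_ne_zero) y).hasFDerivAt)
    (((hT.fderiv_right (m := 1) le_rfl).differentiable one_ne_zero) (waveMap l z)).hasFDerivAt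
    (Pi.single i 1) (Pi.single j 1)
  rw [ωc, pdv_pdv_bilinear_diag_add_comp _ _ hT, pdv_pdv_bilinear_diag_add_comp _ _ hT]
  simp only [waveMap_dx, waveMap_dy, map_smul, smul_eq_mul, hsymm]
  simp only [thetaForm, dx, dy, coordForm_apply, xCoord_apply, yCoord_apply, Pi.single_apply,
    Pi.zero_apply, mul_ite, mul_one, mul_zero, Finset.sum_ite_eq', Finset.mem_univ, ↓reduceIte,
    Finset.sum_const_zero, add_zero, neg_mul]
  ring

lemma pd2_phiForm_add (hT : ContDiff ℝ 2 T) {i j : Fin 4} (hij : i ≠ j) (x : Fin 4 → ℝ) :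
    pd2 i j (fun x => phiForm a b l x x + T x) x
      = (a i * b j - a j * b i) / (l i - l j)
        + fderiv ℝ (fderiv ℝ T) x (Pi.single i 1) (Pi.single j 1) := by
  have hpdv := pdv_pdv_bilinear_diag_add_comp (phiForm a b l) (ContinuousLinearMap.id ℝ _) hT
    (Pi.single i 1) (Pi.single j 1) x
  simp only [ContinuousLinearMap.id_apply] at hpdv
  rw [pd2, hpdv]
  simp only [phiForm, ne_eq, ite_not, coordForm_apply, ContinuousLinearMap.proj_apply,
    Pi.single_apply, mul_ite, mul_one, mul_zero, Finset.sum_ite_eq', Finset.mem_univ, ↓reduceIte,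
    hij, hij.symm, add_left_inj]
  rw [← neg_sub (a i * b j), ← neg_sub (l i), neg_div_neg_eq]
  ring

lemma theta_eq_thetaForm_add {Θ : E8 → ℝ}
    (hΘ : ∀ x y : Fin 4 → ℝ, Θ (x, y) =
      (1 / 2) * ∑ i : Fin 4, ∑ j : Fin 4, (a i * b j - a j * b i) * x i * y j
        + T (fun k => x k - l k * y k)) :
    Θ = fun z => thetaForm a b z z + T (waveMap l z) := by
  ext ⟨x, y⟩
  simp only [hΘ, thetaForm, coordForm_apply, xCoord_apply, yCoord_apply, Finset.mul_sum]
  congr 1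
  exact Finset.sum_congr rfl fun i _ => Finset.sum_congr rfl fun j _ => by ring

lemma phi_eq_phiForm_add {Φ : (Fin 4 → ℝ) → ℝ}
    (hΦ : ∀ x : Fin 4 → ℝ, Φ x =
      (1 / 2) * ∑ i : Fin 4, ∑ j : Fin 4,
          (if i ≠ j then (a i * b j - a j * b i) * x i * x j / (l i - l j) else 0)
        + T x) :
    Φ = fun x => phiForm a b l x x + T x := by
  ext x
  simp only [hΦ, phiForm, coordForm_apply, ContinuousLinearMap.proj_apply, Finset.mul_sum]
  congr 1
  refine Finset.sum_congr rfl fun i _ => Finset.sum_congr rfl fun j _ => ?_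
  split_ifs <;> ring

end Reduction

/-- for pairwise distinct `λ₁,…,λ₄`, with
`Θ(x,y) = ½ Σ_{i,j}(a_i b_j − a_j b_i)x^i y^j + Θ̃(x¹−λ₁y¹,…,x⁴−λ₄y⁴)` and
`Φ(x) = ½ Σ_{i≠j}(a_i b_j − a_j b_i)x^i x^j/(λ_i−λ_j) + Θ̃(x)`, `Θ` satisfies the TED
equation on `ℝ⁸` iff `Φ` satisfies the general heavenly equation on `ℝ⁴`; moreover, the
TED expression of `Θ` at `(x,y)` equals the general heavenly expression of `Φ` at
`(x¹−λ₁y¹,…,x⁴−λ₄y⁴)`. -/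
theorem stmt13 (T : (Fin 4 → ℝ) → ℝ) (hT : ContDiff ℝ 2 T)
    (a b l : Fin 4 → ℝ) (hl : ∀ i j : Fin 4, i ≠ j → l i ≠ l j)
    (Θ : E8 → ℝ)
    (hΘ : ∀ x y : Fin 4 → ℝ, Θ (x, y) =
      (1 / 2) * ∑ i : Fin 4, ∑ j : Fin 4, (a i * b j - a j * b i) * x i * y j
        + T (fun k => x k - l k * y k))
    (Φ : (Fin 4 → ℝ) → ℝ)
    (hΦ : ∀ x : Fin 4 → ℝ, Φ x =
      (1 / 2) * ∑ i : Fin 4, ∑ j : Fin 4,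
          (if i ≠ j then (a i * b j - a j * b i) * x i * x j / (l i - l j) else 0)
        + T x) :
    ((∀ z : E8, tedExpr Θ z = 0) ↔ (∀ x : Fin 4 → ℝ, ghExpr l Φ x = 0)) ∧
      ∀ x y : Fin 4 → ℝ, tedExpr Θ (x, y) = ghExpr l Φ (fun k => x k - l k * y k) := by
  have reduction : ∀ z, tedExpr Θ z = ghExpr l Φ (waveMap l z) := fun z =>
    tedExpr_eq_ghExpr fun i j hij => by
      rw [theta_eq_thetaForm_add hΘ, phi_eq_phiForm_add hΦ, ωc_thetaForm_add hT,
        pd2_phiForm_add hT hij, mul_add, mul_div_cancel₀ _ (sub_ne_zero.2 (hl i j hij))]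
  refine ⟨⟨fun h x => ?_, fun h z => (reduction z).trans (h _)⟩, fun x y => reduction (x, y)⟩
  simpa [reduction] using h (x, 0)
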